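/- arXiv:1708.00721 — 2 statements merged into one kernel-verified Lean document; each statement's English description precedes it below -/
import Mathlib

section
/- In the commuting-permutations construction, for every ω ∈ Ω and every g ∈ Δ(p,q,r) we have B_ω^{φ(g)} = B_{ω^{π(g)}} = B_ω^{π(g)} (sets acted on pointwise). Consequently, the sets B_ω (ω ∈ Ω) are blocks for the action of the subgroup ⟨φ_x, φ_y⟩ on Ω if and only if they are blocks for the action of π(Δ(p,q,r)) on Ω. -/
open Equiv

def triRels (p q r : ℕ) : Set (FreeGroup (Fin 2)) :=
  {FreeGroup.of 0 ^ p, FreeGroup.of 1 ^ q, (FreeGroup.of 0 * FreeGroup.of 1) ^ r}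

/-- The triangle group `Δ(p,q,r) = ⟨x, y ∣ x^p = y^q = (xy)^r = 1⟩`. -/
abbrev Tri (p q r : ℕ) := PresentedGroup (triRels p q r)

/-- The generator `x` of the triangle group. -/
def gx (p q r : ℕ) : Tri p q r := PresentedGroup.of 0

/-- The generator `y` of the triangle group. -/
def gy (p q r : ℕ) : Tri p q r := PresentedGroup.of 1

/-- `φ_x = π(x) ∘ (a_1,…,a_p)(b_p,…,b_1)` where `a_i = h_i(a)`, `b_i = h_i(b)`. -/
def phiXcomm (p q r : ℕ) (Ω : Type) [DecidableEq Ω]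
    (π : Tri p q r →* Equiv.Perm Ω) (h : Fin p → Equiv.Perm Ω) (a b : Ω) : Equiv.Perm Ω :=
  π (gx p q r) * (List.ofFn fun i : Fin p => h i a).formPerm *
    ((List.ofFn fun i : Fin p => h i b).reverse).formPerm


/-! The sets `B_ω` are the orbits of the group `S = {h_1, …, h_p}`. As `π(Δ)` centralises `S`,
every `π g` maps the orbit of `ω` onto the orbit of `ω^{π g}`. The two cycles in `φ_x` only move
points of the orbits of `a` and `b`, inside those orbits, so they fix every `S`-orbit setwise;
hence `φ_x` and `π(x)` induce the same map on orbits, as do `φ_y = π(y)`, and by generation so do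
`φ g` and `π g` for all `g`. The two block conditions are then literally the same. -/

open MulAction

section PermSubgroupOrbits

variable {Ω : Type*} (S : Subgroup (Perm Ω))

theorem mem_orbit_permSubgroup_iff {x y : Ω} : y ∈ orbit S x ↔ ∃ s ∈ S, s x = y := by
  simp [mem_orbit_iff, Subgroup.smul_def, Perm.smul_def]

theorem range_apply_eq_orbit {ι : Type*} {h : ι → Perm Ω}
    (hS : (S : Set (Perm Ω)) = Set.range h) (ω : Ω) :
    Set.range (fun i => h i ω) = orbit S ω := by
  ext y
  simp_rw [mem_orbit_permSubgroup_iff, ← SetLike.mem_coe, hS, Set.exists_range_iff, Set.mem_range]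

theorem image_orbit_of_commute {σ : Perm Ω} (hσ : ∀ s ∈ S, Commute s σ) (ω : Ω) :
    σ '' orbit S ω = orbit S (σ ω) := by
  have hswap : ∀ s ∈ S, s (σ ω) = σ (s ω) := fun s hs => congrArg (· ω) (hσ s hs).eq
  ext y
  simp only [Set.mem_image, mem_orbit_permSubgroup_iff]
  constructor
  · rintro ⟨_, ⟨s, hs, rfl⟩, rfl⟩
    exact ⟨s, hs, hswap s hs⟩
  · rintro ⟨s, hs, rfl⟩
    exact ⟨s ω, ⟨s, hs, rfl⟩, (hswap s hs).symm⟩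

theorem image_orbit_of_apply_mem_orbit {σ : Perm Ω} (hσ : ∀ x, σ x ∈ orbit S x) (ω : Ω) :
    σ '' orbit S ω = orbit S ω := by
  refine Set.Subset.antisymm ?_ fun z hz => ⟨σ⁻¹ z, ?_, by simp⟩
  · rintro _ ⟨y, hy, rfl⟩
    rw [← orbit_eq_iff.mpr hy]
    exact hσ y
  · have hz' : orbit S z = orbit S (σ⁻¹ z) := orbit_eq_iff.mpr (by simpa using hσ (σ⁻¹ z))
    rw [← orbit_eq_iff.mpr hz, hz']
    exact mem_orbit_self _

theorem formPerm_apply_mem_orbit [DecidableEq Ω] {l : List Ω} {c : Ω}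
    (hl : ∀ y ∈ l, y ∈ orbit S c) (x : Ω) : l.formPerm x ∈ orbit S x := by
  by_cases hx : x ∈ l
  · rw [orbit_eq_iff.mpr (hl x hx)]
    exact hl _ (List.formPerm_apply_mem_of_mem hx)
  · rw [List.formPerm_apply_of_notMem hx]
    exact mem_orbit_self x

theorem image_orbit_mul_formPerm_mul_formPerm [DecidableEq Ω] {σ : Perm Ω}
    (hσ : ∀ s ∈ S, Commute s σ) {l l' : List Ω} {c c' : Ω}
    (hl : ∀ y ∈ l, y ∈ orbit S c) (hl' : ∀ y ∈ l', y ∈ orbit S c') (ω : Ω) :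
    ⇑(σ * l.formPerm * l'.formPerm) '' orbit S ω = orbit S (σ ω) := by
  simp only [Perm.coe_mul, Set.image_comp,
    image_orbit_of_apply_mem_orbit S (formPerm_apply_mem_orbit S hl),
    image_orbit_of_apply_mem_orbit S (formPerm_apply_mem_orbit S hl'),
    image_orbit_of_commute S hσ]

def orbitImagePairs : Subgroup (Perm Ω × Perm Ω) where
  carrier := {f | ∀ ω, f.1 '' orbit S ω = orbit S (f.2 ω)}
  one_mem' := by simp
  mul_mem' := by
    rintro ⟨σ, τ⟩ ⟨σ', τ'⟩ hf hf' ω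
    simp only [Set.mem_ofPred_eq, Prod.mk_mul_mk, Perm.coe_mul, Set.image_comp] at *
    rw [hf', hf, Function.comp_apply]
  inv_mem' := by
    rintro ⟨σ, τ⟩ hf ω
    simp only [Set.mem_ofPred_eq, Prod.inv_mk] at *
    have hω := hf (τ⁻¹ ω)
    rw [show τ (τ⁻¹ ω) = ω by simp] at hω
    rw [← hω, Set.image_image]
    simp

theorem mem_orbitImagePairs {f : Perm Ω × Perm Ω} :
    f ∈ orbitImagePairs S ↔ ∀ ω, f.1 '' orbit S ω = orbit S (f.2 ω) :=
  Iff.rfl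

end PermSubgroupOrbits

section TriangleGroup

variable {p q r : ℕ}

theorem Tri.closure_gx_gy : Subgroup.closure {gx p q r, gy p q r} = ⊤ := by
  rw [← PresentedGroup.closure_range_of]
  congr 1
  ext g
  simp [Fin.exists_fin_two, gx, gy, eq_comm]

theorem Tri.range_eq_closure {G : Type*} [Group G] (φ : Tri p q r →* G) :
    φ.range = Subgroup.closure {φ (gx p q r), φ (gy p q r)} := by
  rw [MonoidHom.range_eq_map, ← Tri.closure_gx_gy, MonoidHom.map_closure, Set.image_pair]

theorem Tri.eq_top_of_gx_mem_of_gy_mem {H : Subgroup (Tri p q r)} (hx : gx p q r ∈ H)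
    (hy : gy p q r ∈ H) : H = ⊤ := by
  rw [eq_top_iff, ← Tri.closure_gx_gy, Subgroup.closure_le]
  exact Set.pair_subset hx hy

end TriangleGroup

theorem commuting_perms_blocks_iff_general
    (p q r : ℕ)
    (Ω : Type) [DecidableEq Ω]
    (π : Tri p q r →* Equiv.Perm Ω)
    (h : Fin p → Equiv.Perm Ω)
    (hsub : ∃ S : Subgroup (Equiv.Perm Ω), (S : Set (Equiv.Perm Ω)) = Set.range h)
    (hcomm : ∀ (i : Fin p) (g : Tri p q r), Commute (h i) (π g))
    (a b : Ω)
    (φ : Tri p q r →* Equiv.Perm Ω)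
    (hφx : φ (gx p q r) = phiXcomm p q r Ω π h a b)
    (hφy : φ (gy p q r) = π (gy p q r)) :
    (∀ (ω : Ω) (g : Tri p q r),
      ⇑(φ g) '' (Set.range fun i : Fin p => h i ω) =
        (Set.range fun i : Fin p => h i (π g ω)) ∧
      ⇑(π g) '' (Set.range fun i : Fin p => h i ω) =
        (Set.range fun i : Fin p => h i (π g ω))) ∧
    ((∀ ω : Ω, ∀ f ∈ Subgroup.closure {phiXcomm p q r Ω π h a b, π (gy p q r)},
        ⇑f '' (Set.range fun i : Fin p => h i ω) = (Set.range fun i : Fin p => h i ω) ∨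
        Disjoint (⇑f '' (Set.range fun i : Fin p => h i ω))
          (Set.range fun i : Fin p => h i ω)) ↔
      (∀ (ω : Ω) (g : Tri p q r),
        ⇑(π g) '' (Set.range fun i : Fin p => h i ω) = (Set.range fun i : Fin p => h i ω) ∨
        Disjoint (⇑(π g) '' (Set.range fun i : Fin p => h i ω))
          (Set.range fun i : Fin p => h i ω))) := by
  obtain ⟨S, hS⟩ := hsub
  have hcommS (g : Tri p q r) : ∀ s ∈ S, Commute s (π g) := by
    intro s hs
    obtain ⟨i, rfl⟩ : s ∈ Set.range h := hS ▸ hs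
    exact hcomm i g
  have hmem (c : Ω) : ∀ y ∈ List.ofFn (fun i => h i c), y ∈ orbit S c := by
    simp [← range_apply_eq_orbit S hS]
  have hπ (g : Tri p q r) : ∀ ω, π g '' orbit S ω = orbit S (π g ω) :=
    image_orbit_of_commute S (hcommS g)
  have hφ (g : Tri p q r) : ∀ ω, φ g '' orbit S ω = orbit S (π g ω) := by
    suffices (orbitImagePairs S).comap (φ.prod π) = ⊤ from (this ▸ Subgroup.mem_top g :)
    refine Tri.eq_top_of_gx_mem_of_gy_mem ?_ ?_ <;>
      simp only [Subgroup.mem_comap, MonoidHom.prod_apply, mem_orbitImagePairs, hφx, hφy]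
    · exact image_orbit_mul_formPerm_mul_formPerm S (hcommS _) (hmem a)
        (by simpa using hmem b)
    · exact hπ _
  simp only [range_apply_eq_orbit S hS]
  refine ⟨fun ω g => ⟨hφ g ω, hπ g ω⟩, ?_⟩
  rw [← hφx, ← hφy, ← Tri.range_eq_closure]
  simp only [MonoidHom.mem_range, forall_exists_index, forall_apply_eq_imp_iff, hφ, hπ]

theorem commuting_perms_blocks_iff
    (p q r k : ℕ) (hp : 0 < p) (hq : 0 < q) (hr : 0 < r) (hk : 0 < k)
    (Ω : Type) [Fintype Ω] [DecidableEq Ω]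
    (π : Tri p q r →* Equiv.Perm Ω)
    (htrans : ∀ z z' : Ω, ∃ g : Tri p q r, π g z = z')
    (h : Fin p → Equiv.Perm Ω)
    (h0 : h ⟨0, hp⟩ = 1)
    (hsub : ∃ S : Subgroup (Equiv.Perm Ω), (S : Set (Equiv.Perm Ω)) = Set.range h)
    (hcomm : ∀ (i : Fin p) (g : Tri p q r), Commute (h i) (π g))
    (a b : Ω)
    (hax : π (gx p q r) a = a) (hbx : π (gx p q r) b = b)
    (hhandle : ((π (gx p q r * gy p q r)) ^ k) a = b)
    (hks : k < Nat.card {w : Ω | ∃ n : ℤ, ((π (gx p q r * gy p q r)) ^ n) a = w})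
    (hdistinct : Function.Injective (Sum.elim (fun i : Fin p => h i a) (fun i : Fin p => h i b)))
    (horb_a : ∀ (i i' : Fin p) (n : ℤ),
      ((π (gx p q r * gy p q r)) ^ n) (h i a) = h i' a → i' = i)
    (horb_b : ∀ (i i' : Fin p) (n : ℤ),
      ((π (gx p q r * gy p q r)) ^ n) (h i a) = h i' b → i' = i)
    (φ : Tri p q r →* Equiv.Perm Ω)
    (hφx : φ (gx p q r) = phiXcomm p q r Ω π h a b)
    (hφy : φ (gy p q r) = π (gy p q r)) :
    (∀ (ω : Ω) (g : Tri p q r),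
      ⇑(φ g) '' (Set.range fun i : Fin p => h i ω) =
        (Set.range fun i : Fin p => h i (π g ω)) ∧
      ⇑(π g) '' (Set.range fun i : Fin p => h i ω) =
        (Set.range fun i : Fin p => h i (π g ω))) ∧
    ((∀ ω : Ω, ∀ f ∈ Subgroup.closure {phiXcomm p q r Ω π h a b, π (gy p q r)},
        ⇑f '' (Set.range fun i : Fin p => h i ω) = (Set.range fun i : Fin p => h i ω) ∨
        Disjoint (⇑f '' (Set.range fun i : Fin p => h i ω))
          (Set.range fun i : Fin p => h i ω)) ↔
      (∀ (ω : Ω) (g : Tri p q r),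
        ⇑(π g) '' (Set.range fun i : Fin p => h i ω) = (Set.range fun i : Fin p => h i ω) ∨
        Disjoint (⇑(π g) '' (Set.range fun i : Fin p => h i ω))
          (Set.range fun i : Fin p => h i ω))) :=
  commuting_perms_blocks_iff_general p q r Ω π h hsub hcomm a b φ hφx hφy
end

section
/- Let p, q, r be positive integers with p prime. If there exists a surjective group homomorphism from the triangle group Δ(p,q,r) onto the cyclic group ℤ/pℤ, then p divides qr. -/
open Equiv

/-!
A homomorphism `f` from `Δ(p,q,r)` to a group `G` is determined by `a = f x` and `b = f y`,
which satisfy `b ^ q = 1` and `(a * b) ^ r = 1`. In a group of prime order `p`, an element whose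
`n`-th power is trivial for some `n` prime to `p` is itself trivial. So if `p` divides neither `q`
nor `r`, first `b = 1`, then `a = 1`, and `f` is trivial, hence not onto `ℤ/pℤ`.
-/

namespace Tri

variable {p q r : ℕ}

lemma mk_eq_one_of_mem_triRels {w : FreeGroup (Fin 2)} (hw : w ∈ triRels p q r) :
    (QuotientGroup.mk w : Tri p q r) = 1 :=
  (QuotientGroup.eq_one_iff w).mpr (Subgroup.subset_normalClosure hw)

lemma gy_pow : gy p q r ^ q = 1 :=
  mk_eq_one_of_mem_triRels (by simp [triRels])

lemma gx_mul_gy_pow : (gx p q r * gy p q r) ^ r = 1 :=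
  mk_eq_one_of_mem_triRels (by simp [triRels])

theorem hom_ext {G : Type*} [Group G] {f g : Tri p q r →* G}
    (hx : f (gx p q r) = g (gx p q r)) (hy : f (gy p q r) = g (gy p q r)) : f = g :=
  PresentedGroup.ext fun i => by fin_cases i <;> assumption

theorem hom_eq_one_of_coprime {G : Type*} [Group G] (f : Tri p q r →* G)
    (hq : (Nat.card G).Coprime q) (hr : (Nat.card G).Coprime r) : f = 1 := by
  have eq_one_of_pow_eq_one {n : ℕ} (hn : (Nat.card G).Coprime n) {g : G} (h : g ^ n = 1) :
      g = 1 :=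
    (pow_eq_one_iff_of_coprime hn).1 ⟨pow_card_eq_one', h⟩
  have hy : f (gy p q r) = 1 :=
    eq_one_of_pow_eq_one hq (by rw [← map_pow, gy_pow, map_one])
  have hx : f (gx p q r) = 1 := by
    refine eq_one_of_pow_eq_one hr ?_
    simpa only [map_pow, map_mul, hy, mul_one, map_one] using congrArg f gx_mul_gy_pow
  exact hom_ext hx hy

end Tri

theorem surj_onto_cyclic_imp_dvd_general
    (p q r : ℕ) (hp : p.Prime)
    (hsurj : ∃ f : Tri p q r →* Multiplicative (ZMod p), Function.Surjective f) :
    p ∣ q * r := by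
  have := Fact.mk hp
  obtain ⟨f, hf⟩ := hsurj
  by_contra hpqr
  have coprime_card {n : ℕ} (hn : ¬ p ∣ n) : (Nat.card (Multiplicative (ZMod p))).Coprime n :=
    (Nat.card_zmod p).symm ▸ hp.coprime_iff_not_dvd.2 hn
  have hf1 : f = 1 := Tri.hom_eq_one_of_coprime f
    (coprime_card fun h => hpqr (h.mul_right r)) (coprime_card fun h => hpqr (h.mul_left q))
  obtain ⟨g, hg⟩ := hf (Multiplicative.ofAdd 1)
  rw [hf1, MonoidHom.one_apply] at hg
  exact one_ne_zero (congrArg Multiplicative.toAdd hg).symm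

theorem surj_onto_cyclic_imp_dvd
    (p q r : ℕ) (hp : p.Prime) (hq : 0 < q) (hr : 0 < r)
    (hsurj : ∃ f : Tri p q r →* Multiplicative (ZMod p), Function.Surjective f) :
    p ∣ q * r :=
  surj_onto_cyclic_imp_dvd_general p q r hp hsurj
end
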